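/- arXiv:2311.17867 — 3 statements merged into one kernel-verified Lean document; each statement's English description precedes it below -/
import Mathlib

section
/- In the all-continuous-normal (CCC) model, NDE(x₀, x₁; w) = σ_y γ (z_{x₁} − z_{x₀}) / τ_y, where z_x = (x − μ_x)/σ_x and τ_y = √((γ+αβ)² + β² + 1). -/
open MeasureTheory ProbabilityTheory
open scoped ENNReal NNReal Real

lemma gaussian_pdf_integral_smul (μ : ℝ) (g : ℝ → ℝ) :
    ∫ x, g x ∂(gaussianReal μ 1) = ∫ x, gaussianPDFReal μ 1 x * g x := by
  rw [gaussianReal_of_var_ne_zero _ one_ne_zero]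
  have h : gaussianPDF μ 1 = fun x => ((gaussianPDFReal μ 1 x).toNNReal : ℝ≥0∞) := rfl
  rw [h, integral_withDensity_eq_integral_smul
    ((measurable_gaussianPDFReal μ 1).real_toNNReal) g]
  congr 1
  ext x
  rw [NNReal.smul_def, smul_eq_mul, Real.coe_toNNReal _ (gaussianPDFReal_nonneg μ 1 x)]

lemma integrable_id_mul_pdf0 : Integrable (fun y : ℝ => y * gaussianPDFReal 0 1 y) := by
  have h2 : (0:ℝ) < (2:ℝ)⁻¹ := by norm_num
  have := (integrable_mul_exp_neg_mul_sq h2).const_mul (√(2 * Real.pi))⁻¹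
  refine this.congr (ae_of_all _ fun y => ?_)
  simp only [gaussianPDFReal, NNReal.coe_one, mul_one]
  ring_nf

lemma integral_id_mul_pdf0 : ∫ y : ℝ, y * gaussianPDFReal 0 1 y = 0 := by
  have hodd : ∀ y : ℝ, (-y) * gaussianPDFReal 0 1 (-y) = -(y * gaussianPDFReal 0 1 y) := by
    intro y
    simp only [gaussianPDFReal]
    ring_nf
  have := MeasureTheory.integral_neg_eq_self (fun y : ℝ => y * gaussianPDFReal 0 1 y)
    (volume : Measure ℝ)
  simp only [hodd] at this
  rw [integral_neg] at this
  linarith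

lemma pdf_eq_pdf0 (μ x : ℝ) : gaussianPDFReal μ 1 x = gaussianPDFReal 0 1 (x - μ) := by
  simp [gaussianPDFReal]

lemma integrable_id_mul_pdf (μ : ℝ) : Integrable (fun x : ℝ => x * gaussianPDFReal μ 1 x) := by
  have hg : Integrable (fun y : ℝ => (y + μ) * gaussianPDFReal 0 1 y) := by
    have := integrable_id_mul_pdf0.add ((integrable_gaussianPDFReal 0 1).const_mul μ)
    refine this.congr (ae_of_all _ fun y => ?_)
    simp only [Pi.add_apply]
    ring
  have := hg.comp_sub_right μ
  refine this.congr (ae_of_all _ fun x => ?_)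
  simp [pdf_eq_pdf0]

lemma gaussian_first_moment (μ : ℝ) : ∫ x : ℝ, x * gaussianPDFReal μ 1 x = μ := by
  have key : ∫ x : ℝ, x * gaussianPDFReal μ 1 x
      = ∫ y : ℝ, (y + μ) * gaussianPDFReal 0 1 y := by
    rw [← integral_sub_right_eq_self (fun y : ℝ => (y + μ) * gaussianPDFReal 0 1 y) μ]
    congr 1
    ext x
    simp [pdf_eq_pdf0 μ x]
  rw [key]
  have hsplit : ∀ y : ℝ, (y + μ) * gaussianPDFReal 0 1 y
      = y * gaussianPDFReal 0 1 y + μ * gaussianPDFReal 0 1 y := fun y => by ring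
  simp_rw [hsplit]
  rw [integral_add integrable_id_mul_pdf0 ((integrable_gaussianPDFReal 0 1).const_mul μ),
    integral_id_mul_pdf0, integral_const_mul, integral_gaussianPDFReal_eq_one 0 one_ne_zero]
  ring

lemma gaussian_affine_integral (μ A B : ℝ) :
    ∫ m, (A + B * m) ∂(gaussianReal μ 1) = A + B * μ := by
  rw [gaussian_pdf_integral_smul]
  have hsplit : ∀ x : ℝ, gaussianPDFReal μ 1 x * (A + B * x)
      = A * gaussianPDFReal μ 1 x + B * (x * gaussianPDFReal μ 1 x) := fun x => by ring
  simp_rw [hsplit]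
  rw [integral_add ((integrable_gaussianPDFReal μ 1).const_mul A)
      ((integrable_id_mul_pdf μ).const_mul B),
    integral_const_mul, integral_const_mul, integral_gaussianPDFReal_eq_one μ one_ne_zero,
    gaussian_first_moment]
  ring

/-- CCC model: the natural direct effect equals `σ_y γ (z_{x₁} − z_{x₀}) / τ_y`.
Here `E{Y(x_a, M(x_b))}` is computed as `E_M{E_Y(Y | M, X = x_a) | X = x_b}`:
the conditional mean of `Y` given the latent variables is
`μ_y + σ_y (γ z + β m)/τ_y` and the conditional law of `Z_m` given `Z_x = z`
is `N(α z, 1)`. -/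
theorem ccc_nde (α β γ μx μy σx σy x0 x1 : ℝ) (hσx : 0 < σx) :
    let τy := Real.sqrt ((γ + α * β) ^ 2 + β ^ 2 + 1)
    let zx := fun x => (x - μx) / σx
    let condY := fun (z m : ℝ) => μy + σy * (γ * z + β * m) / τy
    let CF := fun xa xb => ∫ m, condY (zx xa) m ∂(gaussianReal (α * zx xb) 1)
    CF x1 x0 - CF x0 x0 = σy * γ * (zx x1 - zx x0) / τy := by
  intro τy zx condY CF
  have hCF : ∀ xa xb : ℝ, CF xa xb
      = (μy + σy * γ * zx xa / τy) + (σy * β / τy) * (α * zx xb) := by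
    intro xa xb
    have : CF xa xb = ∫ m, ((μy + σy * γ * zx xa / τy) + (σy * β / τy) * m)
        ∂(gaussianReal (α * zx xb) 1) := by
      simp only [CF, condY]
      congr 1
      ext m
      ring
    rw [this, gaussian_affine_integral]
  rw [hCF, hCF]
  ring
end

section
/- In the all-continuous-normal (CCC) model, NIE(x₀, x₁; w) = σ_y αβ (z_{x₁} − z_{x₀}) / τ_y, where z_x = (x − μ_x)/σ_x and τ_y = √((γ+αβ)² + β² + 1). -/
open MeasureTheory ProbabilityTheory

lemma integral_const_add_mul_id {μ : Measure ℝ} [IsProbabilityMeasure μ]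
    (hμ : Integrable (fun x => x) μ) (a b : ℝ) :
    ∫ x, a + b * x ∂μ = a + b * ∫ x, x ∂μ := by
  rw [integral_add (integrable_const a) (hμ.const_mul b), integral_const, integral_const_mul,
    probReal_univ, one_smul]

lemma integral_const_add_mul_gaussianReal (a b μ : ℝ) (v : NNReal) :
    ∫ x, a + b * x ∂gaussianReal μ v = a + b * μ := by
  rw [integral_const_add_mul_id ((memLp_id_gaussianReal 1).integrable le_rfl),
    integral_id_gaussianReal]

theorem ccc_nie_general (α β γ μx μy σx σy x0 x1 : ℝ) :
    let τy := Real.sqrt ((γ + α * β) ^ 2 + β ^ 2 + 1)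
    let zx := fun x => (x - μx) / σx
    let condY := fun (z m : ℝ) => μy + σy * (γ * z + β * m) / τy
    let CF := fun xa xb => ∫ m, condY (zx xa) m ∂(gaussianReal (α * zx xb) 1)
    CF x1 x1 - CF x1 x0 = σy * (α * β) * (zx x1 - zx x0) / τy := by
  intro τy zx condY CF
  have condY_affine : ∀ z m, condY z m = (μy + σy * γ * z / τy) + σy * β / τy * m := by
    intro z m
    ring
  have CF_eq : ∀ xa xb, CF xa xb = (μy + σy * γ * zx xa / τy) + σy * β / τy * (α * zx xb) := by
    intro xa xb
    simp only [CF, condY_affine, integral_const_add_mul_gaussianReal]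
  rw [CF_eq, CF_eq]
  ring

/-- CCC model: the natural indirect effect equals `σ_y αβ (z_{x₁} − z_{x₀}) / τ_y`. -/
theorem ccc_nie (α β γ μx μy σx σy x0 x1 : ℝ) (hσx : 0 < σx) :
    let τy := Real.sqrt ((γ + α * β) ^ 2 + β ^ 2 + 1)
    let zx := fun x => (x - μx) / σx
    let condY := fun (z m : ℝ) => μy + σy * (γ * z + β * m) / τy
    let CF := fun xa xb => ∫ m, condY (zx xa) m ∂(gaussianReal (α * zx xb) 1)
    CF x1 x1 - CF x1 x0 = σy * (α * β) * (zx x1 - zx x0) / τy :=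
  ccc_nie_general α β γ μx μy σx σy x0 x1
end

section
/- For a standard normal Z and real constants a, b, E[Φ(a + bZ)] = Φ(a/√(1+b²)), where Φ is the standard normal CDF. -/
/-!
If `W, Z` are independent standard normals, then `E[Φ(a + bZ)] = P(W ≤ a + bZ) = P(W - bZ ≤ a)`.
In terms of measures: integrating `Φ(a - x)` against the law `N(0, b²)` of `-bZ` evaluates the
convolution `N(0, b²) ∗ N(0, 1) = N(0, 1 + b²)` on `(-∞, a]`, and standardizing gives
`Φ(a / √(1 + b²))`.
-/

open MeasureTheory ProbabilityTheory Set
open scoped NNReal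

lemma conv_apply_Iic (μ ν : Measure ℝ) [SFinite ν] (a : ℝ) :
    (μ ∗ ν) (Iic a) = ∫⁻ x, ν (Iic (a - x)) ∂μ := by
  rw [Measure.conv, Measure.map_apply measurable_add measurableSet_Iic,
    Measure.prod_apply (measurable_add measurableSet_Iic)]
  congr with x
  congr with y
  simp [le_sub_iff_add_le']

lemma gaussianReal_apply_Iic (μ : ℝ) {v : ℝ≥0} (hv : v ≠ 0) (a : ℝ) :
    gaussianReal μ v (Iic a) = gaussianReal 0 1 (Iic ((a - μ) / √v)) := by
  have hσ : 0 < √(v : ℝ) := Real.sqrt_pos.mpr (by positivity)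
  have hmap : (gaussianReal 0 1).map ((· + μ) ∘ (√v * ·)) = gaussianReal μ v := by
    rw [← Measure.map_map (by fun_prop) (by fun_prop), gaussianReal_map_const_mul,
      gaussianReal_map_add_const]
    congr
    · simp
    · ext; simp
  rw [← hmap, Measure.map_apply (by fun_prop) measurableSet_Iic]
  congr with x
  simp [le_div_iff₀ hσ, le_sub_iff_add_le, mul_comm]

lemma measurable_measure_Iic (μ : Measure ℝ) : Measurable fun t ↦ μ (Iic t) :=
  Monotone.measurable fun _ _ hst ↦ measure_mono (Iic_subset_Iic.mpr hst)

/-- For `Z ~ N(0,1)` and reals `a, b`: `E[Φ(a + bZ)] = Φ(a/√(1+b²))`,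
where `Φ` is the standard normal CDF. -/
theorem gaussian_cdf_identity (a b : ℝ) :
    let Φ := fun x : ℝ => ((gaussianReal 0 1) (Set.Iic x)).toReal
    ∫ z, Φ (a + b * z) ∂(gaussianReal 0 1) = Φ (a / Real.sqrt (1 + b ^ 2)) := by
  intro Φ
  set γ := gaussianReal 0 1
  have hconv : (γ.map (-b * ·)) ∗ γ = gaussianReal 0 (.mk ((-b) ^ 2) (sq_nonneg _) * 1 + 1) := by
    rw [gaussianReal_map_const_mul, gaussianReal_conv_gaussianReal, mul_zero, add_zero]
  calc ∫ z, Φ (a + b * z) ∂γ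
      = (∫⁻ z, γ (Iic (a - -b * z)) ∂γ).toReal := by
        rw [integral_toReal]
        · simp [γ]
        · exact ((measurable_measure_Iic γ).comp (by fun_prop)).aemeasurable
        · exact ae_of_all _ fun _ ↦ measure_lt_top _ _
    _ = (gaussianReal 0 (.mk ((-b) ^ 2) (sq_nonneg _) * 1 + 1) (Iic a)).toReal := by
        rw [← hconv, conv_apply_Iic,
          lintegral_map (f := fun x ↦ γ (Iic (a - x)))
            ((measurable_measure_Iic γ).comp (by fun_prop)) (by fun_prop)]
    _ = Φ (a / √(1 + b ^ 2)) := by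
        rw [gaussianReal_apply_Iic 0 (by positivity), sub_zero]
        simp [Φ, add_comm]
end
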